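/- Assume G : H → ℝ is μ-strongly convex and locally Lipschitz smooth, and run PAGD with friction η = √μ and step size s ∈ (0, min{1/L_B, ((r−1)/(r+1))²/μ}], where r > 1 and L_B is a Lipschitz smoothness constant of G on the invariant set 𝔅 = {x ∈ H : ‖x − x*‖_𝓛 ≤ R} with R = √((2/μ)(G(x₀) − G*)) + (1/η)√(2r(G(x₀) − G*)). Then the residuals converge to zero at least ℓ²-fast in the 𝓛⁻¹-norm: for every N ≥ 0, Σ_{k=0}^{N} ‖G'(y_k)‖_{𝓛⁻¹}² ≤ (2(1+λ)/(s(1−λ)))(G(x₀) − G*), and hence Σ_{k=0}^{∞} ‖G'(y_k)‖_{𝓛⁻¹}² < ∞. -/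

import Mathlib

open TopologicalSpace

open Set

/-! The energy `E_k = 2s(G(x_k) − G*) + λ‖x_k − x_{k−1}‖²_𝓛` drops by at least
`s²θ‖G'(y_k)‖²_{𝓛⁻¹}` at every step, so the residuals sum to at most
`E_0 / (s²θ) = 2(G(x₀) − G*)/(sθ)`, and `(1 + λ)/(1 − λ) = 1/θ`. The drop combines the descent
lemma at `y_k`, strong convexity between `y_k` and `x_k`, and Cauchy–Schwarz for `𝓛`.
The descent lemma needs smoothness, which only holds on `𝔅`: as long as `E_k ≤ E_0`,
strong convexity puts `y_k` within half the radius of `𝔅`, and smoothness on the ball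
around `y_k` bounds the step `s‖G'(y_k)‖_{𝓛⁻¹}` by the remaining distance to the boundary. -/

section FormSeminorm

variable {H : Type*} [NormedAddCommGroup H] [NormedSpace ℝ H] {L : H →ₗ[ℝ] H →L[ℝ] ℝ}

theorem form_le_sqrt_mul_sqrt (hsymm : ∀ x y, L x y = L y x) (hL : ∀ x, 0 ≤ L x x) (x y : H) :
    L x y ≤ √(L x x) * √(L y y) := by
  have hcs : L x y * L y x ≤ L x x * L y y :=
    LinearMap.BilinForm.apply_mul_apply_le_of_forall_zero_le
      ((ContinuousLinearMap.coeLM ℝ).comp L) hL x y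
  rw [← hsymm x y, ← sq] at hcs
  calc L x y ≤ √(L x y ^ 2) := Real.le_sqrt_of_sq_le le_rfl
    _ ≤ √(L x x * L y y) := Real.sqrt_le_sqrt hcs
    _ = √(L x x) * √(L y y) := Real.sqrt_mul (hL x) _

theorem form_smul_smul (a b : ℝ) (x y : H) :
    L (a • x) (b • y) = a * b * L x y := by
  simp only [map_smul, smul_apply, smul_eq_mul]; ring

variable (L) in
noncomputable def formSeminorm (hsymm : ∀ x y, L x y = L y x) (hL : ∀ x, 0 ≤ L x x) :
    Seminorm ℝ H :=
  Seminorm.of (fun z => √(L z z))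
    (fun x y => by
      have hxy := form_le_sqrt_mul_sqrt hsymm hL x y
      rw [Real.sqrt_le_left (by positivity)]
      simp only [map_add, add_apply, hsymm y x]
      nlinarith [Real.sq_sqrt (hL x), Real.sq_sqrt (hL y)])
    (fun a x => by
      rw [form_smul_smul, ← sq, Real.sqrt_mul (sq_nonneg a), Real.sqrt_sq_eq_abs, Real.norm_eq_abs])

theorem sq_formSeminorm (hsymm : ∀ x y, L x y = L y x) (hL : ∀ x, 0 ≤ L x x) (z : H) :
    formSeminorm L hsymm hL z ^ 2 = L z z := Real.sq_sqrt (hL z)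

end FormSeminorm

section Taylor

variable {H : Type*} [NormedAddCommGroup H] [NormedSpace ℝ H] {G : H → ℝ} {G' : H → H →L[ℝ] ℝ}

theorem sub_sub_fderiv_le_of_fderiv_sub_le (hG : ∀ x, HasFDerivAt G (G' x) x) {w Δ : H} {c : ℝ}
    (h : ∀ t ∈ Ioo (0 : ℝ) 1, (G' (w + t • Δ) - G' w) Δ ≤ c * t) :
    G (w + Δ) - G w - G' w Δ ≤ c / 2 := by
  let F : ℝ → ℝ := fun t => G (w + t • Δ) - t * G' w Δ - c / 2 * t ^ 2
  have hF : ∀ t, HasDerivAt F (G' (w + t • Δ) Δ - G' w Δ - c * t) t := by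
    intro t
    have hline : HasDerivAt (fun τ : ℝ => w + τ • Δ) Δ t := by
      simpa using ((hasDerivAt_id t).smul_const Δ).const_add w
    have hcomp := ((hG _).comp_hasDerivAt t hline).sub ((hasDerivAt_id t).mul_const (G' w Δ))
      |>.sub ((hasDerivAt_pow 2 t).const_mul (c / 2))
    exact hcomp.congr_deriv (by norm_num; ring)
  have hanti : AntitoneOn F (Icc 0 1) :=
    antitoneOn_of_hasDerivWithinAt_nonpos (convex_Icc 0 1)
      (fun t _ => (hF t).continuousAt.continuousWithinAt) (fun t _ => (hF t).hasDerivWithinAt)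
      (fun t ht => by
        rw [interior_Icc] at ht
        linarith [sub_apply (G' (w + t • Δ)) (G' w) Δ ▸ h t ht])
  have h10 : F 1 ≤ F 0 :=
    hanti (left_mem_Icc.2 zero_le_one) (right_mem_Icc.2 zero_le_one) zero_le_one
  have hF1 : F 1 = G (w + Δ) - G' w Δ - c / 2 := by simp [F]
  have hF0 : F 0 = G w := by simp [F]
  linarith

variable {L : H →ₗ[ℝ] H →L[ℝ] ℝ}

theorem add_fderiv_add_le_of_strongMono (hG : ∀ x, HasFDerivAt G (G' x) x) {μ : ℝ}
    (hsc : ∀ x y, (G' x - G' y) (x - y) ≥ μ * L (x - y) (x - y)) (w z : H) :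
    G w + G' w (z - w) + μ / 2 * L (z - w) (z - w) ≤ G z := by
  have key := sub_sub_fderiv_le_of_fderiv_sub_le (G := -G) (G' := -G') (fun x => (hG x).neg)
    (w := w) (Δ := z - w) (c := -(μ * L (z - w) (z - w))) fun t ht => by
      have h := hsc (w + t • (z - w)) w
      rw [add_sub_cancel_left, map_smul, form_smul_smul] at h
      simp only [Pi.neg_apply, neg_sub_neg, sub_apply, smul_eq_mul] at h ⊢
      nlinarith [ht.1]
  simp only [Pi.neg_apply, add_sub_cancel, neg_apply] at key
  linarith

theorem le_add_fderiv_add_of_smoothOn (hG : ∀ x, HasFDerivAt G (G' x) x) {B : Set H}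
    (hB : Convex ℝ B) {LB : ℝ}
    (hsm : ∀ z ∈ B, ∀ w ∈ B, (G' z - G' w) (z - w) ≤ LB * L (z - w) (z - w))
    {w z : H} (hw : w ∈ B) (hz : z ∈ B) :
    G z ≤ G w + G' w (z - w) + LB / 2 * L (z - w) (z - w) := by
  have key := sub_sub_fderiv_le_of_fderiv_sub_le hG (w := w) (Δ := z - w)
    (c := LB * L (z - w) (z - w)) fun t ht => by
      have h := hsm _ (hB.add_smul_sub_mem hw hz (Ioo_subset_Icc_self ht)) w hw
      rw [add_sub_cancel_left, map_smul, form_smul_smul] at h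
      simp only [sub_apply, smul_eq_mul] at h ⊢
      nlinarith [ht.1]
  rw [add_sub_cancel] at key
  linarith

end Taylor

section Descent

variable {H : Type*} [NormedAddCommGroup H] [NormedSpace ℝ H] {L : H →ₗ[ℝ] H →L[ℝ] ℝ}
  {p : Seminorm ℝ H} {G : H → ℝ} {G' : H → H →L[ℝ] ℝ} {xstar : H} {R LB : ℝ}

theorem sub_min_le_of_smoothOn_closedBall (hp : ∀ z, p z ^ 2 = L z z)
    (hG : ∀ x, HasFDerivAt G (G' x) x) (hmin : ∀ z, G xstar ≤ G z)
    (hsm : ∀ z ∈ p.closedBall xstar R, ∀ w ∈ p.closedBall xstar R,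
      (G' z - G' w) (z - w) ≤ LB * L (z - w) (z - w))
    {y : H} (hy : y ∈ p.closedBall xstar R) :
    G y - G xstar ≤ LB / 2 * p (y - xstar) ^ 2 := by
  have hcrit : G' xstar = 0 := IsLocalMin.hasFDerivAt_eq_zero (.of_forall hmin) (hG xstar)
  have hx : xstar ∈ p.closedBall xstar R :=
    p.mem_closedBall_self (le_trans (apply_nonneg p _) hy)
  have h := le_add_fderiv_add_of_smoothOn hG (p.convex_closedBall _ _) hsm hx hy
  rw [hcrit, ← hp] at h
  simp only [zero_apply, add_zero] at h
  linarith

theorem mul_seminorm_le_of_smoothOn_closedBall (hp : ∀ z, p z ^ 2 = L z z)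
    (hG : ∀ x, HasFDerivAt G (G' x) x) (hmin : ∀ z, G xstar ≤ G z) (hLB : 0 ≤ LB)
    (hsm : ∀ z ∈ p.closedBall xstar R, ∀ w ∈ p.closedBall xstar R,
      (G' z - G' w) (z - w) ≤ LB * L (z - w) (z - w))
    {y P : H} (hP : L P = G' y) {ρ : ℝ} (hρ : 0 ≤ ρ) (hyρ : p (y - xstar) + ρ ≤ R) :
    ρ * p P ≤ G y - G xstar + LB / 2 * ρ ^ 2 := by
  have hy : y ∈ p.closedBall xstar R := by
    rw [p.mem_closedBall]; linarith
  rcases (apply_nonneg p P).eq_or_lt with hP0 | hPpos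
  · rw [← hP0, mul_zero]
    have := hmin y
    positivity
  set t := ρ / p P
  have hz : y - t • P ∈ p.closedBall xstar R := by
    rw [p.mem_closedBall, sub_right_comm]
    calc p (y - xstar - t • P) ≤ p (y - xstar) + p (t • P) := map_sub_le_add p _ _
      _ = p (y - xstar) + ρ := by
        rw [map_smul_eq_mul, Real.norm_eq_abs, abs_of_nonneg (by positivity),
          div_mul_cancel₀ _ hPpos.ne']
      _ ≤ R := hyρ
  have h := le_add_fderiv_add_of_smoothOn hG (p.convex_closedBall _ _) hsm hy hz
  rw [sub_sub_cancel_left, ← neg_smul, form_smul_smul, ← hP, map_smul, smul_eq_mul, ← hp] at h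
  have htP : t * p P = ρ := div_mul_cancel₀ _ hPpos.ne'
  rw [show -t * p P ^ 2 = -(ρ * p P) by rw [← htP]; ring,
    show -t * -t * p P ^ 2 = ρ ^ 2 by rw [← htP]; ring] at h
  linarith [hmin (y - t • P)]

theorem smul_seminorm_le_of_smoothOn_closedBall (hp : ∀ z, p z ^ 2 = L z z)
    (hG : ∀ x, HasFDerivAt G (G' x) x) (hmin : ∀ z, G xstar ≤ G z) (hLB : 0 ≤ LB)
    (hsm : ∀ z ∈ p.closedBall xstar R, ∀ w ∈ p.closedBall xstar R,
      (G' z - G' w) (z - w) ≤ LB * L (z - w) (z - w))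
    {s : ℝ} (hs : 0 ≤ s) (hsLB : s * LB ≤ 1) {y P : H} (hP : L P = G' y)
    (hy : 2 * p (y - xstar) ≤ R) :
    s * p P ≤ R - p (y - xstar) := by
  set ny := p (y - xstar)
  have hny : 0 ≤ ny := apply_nonneg p _
  have hyB : y ∈ p.closedBall xstar R := by
    rw [p.mem_closedBall]; linarith
  have hgrowth : G y - G xstar ≤ LB / 2 * ny ^ 2 :=
    sub_min_le_of_smoothOn_closedBall hp hG hmin hsm hyB
  have hgrad := mul_seminorm_le_of_smoothOn_closedBall hp hG hmin hLB hsm hP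
    (ρ := R - ny) (by linarith) (by linarith)
  have hroom : (R - ny) * p P ≤ LB * (R - ny) ^ 2 := by
    nlinarith [mul_le_mul_of_nonneg_left (pow_le_pow_left₀ hny (by linarith : ny ≤ R - ny) 2) hLB]
  rcases (show 0 ≤ R - ny by linarith).eq_or_lt with hR | hR
  · have hyx : G y ≤ G xstar := by
      have : ny = 0 := by linarith
      rw [this, sq, mul_zero, mul_zero] at hgrowth
      linarith
    have hcrit : G' y = 0 :=
      IsLocalMin.hasFDerivAt_eq_zero (.of_forall fun z => hyx.trans (hmin z)) (hG y)
    have hP0 : p P = 0 := by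
      rw [← sq_eq_zero_iff (M₀ := ℝ), hp, hP, hcrit, zero_apply]
    rw [hP0, ← hR, mul_zero]
  · have hPle : p P ≤ LB * (R - ny) := by nlinarith
    nlinarith [mul_le_mul_of_nonneg_left hPle hs]

theorem two_mul_le_of_smoothOn_closedBall (hp : ∀ z, p z ^ 2 = L z z)
    (hG : ∀ x, HasFDerivAt G (G' x) x) (hmin : ∀ z, G xstar ≤ G z) (hLB : 0 ≤ LB)
    (hsm : ∀ z ∈ p.closedBall xstar R, ∀ w ∈ p.closedBall xstar R,
      (G' z - G' w) (z - w) ≤ LB * L (z - w) (z - w))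
    {s : ℝ} (hs : 0 ≤ s) (hsLB : s * LB ≤ 1) {y P : H} (hP : L P = G' y)
    (hy : 2 * p (y - xstar) ≤ R) :
    2 * G (y - s • P) ≤ 2 * G y - s * L P P := by
  have hstep := smul_seminorm_le_of_smoothOn_closedBall hp hG hmin hLB hsm hs hsLB hP hy
  have hyB : y ∈ p.closedBall xstar R := by
    rw [p.mem_closedBall]; linarith [apply_nonneg p (y - xstar)]
  have hxB : y - s • P ∈ p.closedBall xstar R := by
    rw [p.mem_closedBall, sub_right_comm]
    calc p (y - xstar - s • P) ≤ p (y - xstar) + p (s • P) := map_sub_le_add p _ _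
      _ ≤ R := by rw [map_smul_eq_mul, Real.norm_eq_abs, abs_of_nonneg hs]; linarith
  have h := le_add_fderiv_add_of_smoothOn hG (p.convex_closedBall _ _) hsm hyB hxB
  rw [sub_sub_cancel_left, ← neg_smul, form_smul_smul, ← hP, map_smul, smul_eq_mul] at h
  have hPP : 0 ≤ L P P := by rw [← hp]; positivity
  nlinarith [mul_le_mul_of_nonneg_right hsLB (mul_nonneg hs hPP)]

end Descent

section Lyapunov

theorem mul_sum_range_add_le_of_step {J g : ℕ → ℝ} {c : ℝ} (hc : 0 ≤ c) (hg : ∀ k, 0 ≤ g k)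
    (hstep : ∀ k, J k ≤ J 0 → c * g k + J (k + 1) ≤ J k) (n : ℕ) :
    c * ∑ k ∈ Finset.range n, g k + J n ≤ J 0 := by
  induction n with
  | zero => simp
  | succ n ih =>
    have hsum : 0 ≤ c * ∑ k ∈ Finset.range n, g k :=
      mul_nonneg hc (Finset.sum_nonneg fun k _ => hg k)
    rw [Finset.sum_range_succ]
    linarith [hstep n (by linarith)]

theorem two_mul_add_le_of_sq_le {μ κ a b u v R : ℝ} (hμ : 0 < μ) (hκ : 0 < κ)
    (hu0 : 0 ≤ u) (hv0 : 0 ≤ v) (hR0 : 0 ≤ R)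
    (hu : μ * u ^ 2 ≤ 2 * b) (hv : μ * v ^ 2 ≤ 2 * κ ^ 2 * (a - b))
    (hR : 8 * (1 + κ ^ 2) * a ≤ μ * R ^ 2) :
    2 * (u + v) ≤ R := by
  have hweighted : κ ^ 2 * (u + v) ^ 2 ≤ (1 + κ ^ 2) * (κ ^ 2 * u ^ 2 + v ^ 2) := by
    nlinarith [sq_nonneg (κ ^ 2 * u - v)]
  have hsum : μ * (u + v) ^ 2 ≤ 2 * (1 + κ ^ 2) * a := by
    have hκ2 : 0 < κ ^ 2 := by positivity
    have hsplit : κ ^ 2 * (μ * u ^ 2) + μ * v ^ 2 ≤ 2 * κ ^ 2 * a := by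
      nlinarith [mul_le_mul_of_nonneg_left hu hκ2.le]
    refine le_of_mul_le_mul_left ?_ hκ2
    nlinarith [mul_le_mul_of_nonneg_left hweighted hμ.le,
      mul_le_mul_of_nonneg_left hsplit (by positivity : (0 : ℝ) ≤ 1 + κ ^ 2)]
  have hsq : (2 * (u + v)) ^ 2 ≤ R ^ 2 := le_of_mul_le_mul_left (by nlinarith) hμ
  exact (pow_le_pow_iff_left₀ (by positivity) hR0 two_ne_zero).1 hsq

theorem pagdLyapunov_coeff_le {θ s lam g h c : ℝ} (hθ0 : 0 < θ) (hθ1 : θ < 1) (hs : 0 < s)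
    (hlam : lam = (1 - θ) / (1 + θ)) (hg : 0 ≤ g) (hh : 0 ≤ h) (hc : c ≤ √g * √h) :
    s ^ 2 * (θ - 1 + lam) * g + 2 * s * lam * (1 - lam) * c
      ≤ (lam * (1 - lam ^ 2) + θ ^ 2 * lam ^ 2) * h := by
  set σ := √g
  set τ := √h
  have hσ : σ ^ 2 = g := Real.sq_sqrt hg
  have hτ : τ ^ 2 = h := Real.sq_sqrt hh
  have hid : (lam * (1 - lam ^ 2) + θ ^ 2 * lam ^ 2) * h
        - (s ^ 2 * (θ - 1 + lam) * g + 2 * s * lam * (1 - lam) * c)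
      = 4 * s * θ * (1 - θ) / (1 + θ) ^ 2 * (σ * τ - c)
        + θ * (1 - θ) / (1 + θ) ^ 3 * ((s * (1 + θ) * σ - 2 * τ) ^ 2
          + θ * (1 - θ) * (1 + θ) * τ ^ 2) := by
    rw [hlam, ← hσ, ← hτ]
    field_simp
    ring
  have h1 : 0 ≤ 4 * s * θ * (1 - θ) / (1 + θ) ^ 2 * (σ * τ - c) := by
    have : 0 ≤ 1 - θ := by linarith
    have : 0 ≤ σ * τ - c := by linarith
    positivity
  have h2 : 0 ≤ θ * (1 - θ) / (1 + θ) ^ 3 * ((s * (1 + θ) * σ - 2 * τ) ^ 2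
      + θ * (1 - θ) * (1 + θ) * τ ^ 2) := by
    have : 0 ≤ 1 - θ := by linarith
    positivity
  linarith

variable {H : Type*} [NormedAddCommGroup H] [NormedSpace ℝ H] {L : H →ₗ[ℝ] H →L[ℝ] ℝ}
  {p : Seminorm ℝ H} {G : H → ℝ} {G' : H → H →L[ℝ] ℝ} {xstar : H} {μ R LB s κ a : ℝ}

variable (L G xstar s) in
def pagdLyapunov (lam : ℝ) (xprev x : H) : ℝ :=
  2 * s * (G x - G xstar) + lam * L (x - xprev) (x - xprev)

theorem pagdLyapunov_nonneg (hL : ∀ z, 0 ≤ L z z) (hmin : ∀ z, G xstar ≤ G z) (hs : 0 ≤ s)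
    {lam : ℝ} (hlam : 0 ≤ lam) (xprev x : H) : 0 ≤ pagdLyapunov L G xstar s lam xprev x :=
  add_nonneg (mul_nonneg (by positivity) (sub_nonneg.2 (hmin x))) (mul_nonneg hlam (hL _))

theorem two_mul_seminorm_le_of_pagdLyapunov_le (hp : ∀ z, p z ^ 2 = L z z)
    (hG : ∀ x, HasFDerivAt G (G' x) x) (hmin : ∀ z, G xstar ≤ G z) (hμ : 0 < μ)
    (hsc : ∀ x y, (G' x - G' y) (x - y) ≥ μ * L (x - y) (x - y))
    (hκ : 0 < κ) (hs : 0 < s) (hμs : μ * s ≤ κ ^ 2)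
    (hR0 : 0 ≤ R) (hR : 8 * (1 + κ ^ 2) * a ≤ μ * R ^ 2)
    {lam : ℝ} (hlam0 : 0 ≤ lam) (hlam1 : lam ≤ 1) {xprev x : H}
    (hE : pagdLyapunov L G xstar s lam xprev x ≤ 2 * s * a) :
    2 * p (x + lam • (x - xprev) - xstar) ≤ R := by
  set D := x - xprev
  have hcrit : G' xstar = 0 := IsLocalMin.hasFDerivAt_eq_zero (.of_forall hmin) (hG xstar)
  have hgrowth := add_fderiv_add_le_of_strongMono hG hsc xstar x
  rw [hcrit, zero_apply, add_zero, ← hp] at hgrowth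
  have hDD : 0 ≤ L D D := by rw [← hp]; positivity
  have hgap : lam * L D D ≤ 2 * s * (a - (G x - G xstar)) := by
    unfold pagdLyapunov at hE; linarith
  have hv : μ * (lam * p D) ^ 2 ≤ 2 * κ ^ 2 * (a - (G x - G xstar)) := by
    have hab : 0 ≤ a - (G x - G xstar) := by nlinarith
    rw [mul_pow, hp]
    nlinarith [mul_le_mul_of_nonneg_left hgap hμ.le, mul_le_mul_of_nonneg_right hμs hab,
      mul_nonneg (mul_nonneg hμ.le hlam0) (mul_nonneg (sub_nonneg.2 hlam1) hDD)]
  have htri : p (x + lam • D - xstar) ≤ p (x - xstar) + lam * p D := by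
    rw [add_sub_right_comm]
    refine (map_add_le_add p _ _).trans_eq ?_
    rw [map_smul_eq_mul, Real.norm_eq_abs, abs_of_nonneg hlam0]
  have := two_mul_add_le_of_sq_le hμ hκ (apply_nonneg p (x - xstar)) (by positivity) hR0
    (by linarith) hv hR
  linarith

theorem pagdLyapunov_step (hsymm : ∀ x y, L x y = L y x) (hp : ∀ z, p z ^ 2 = L z z)
    (hG : ∀ x, HasFDerivAt G (G' x) x) (hmin : ∀ z, G xstar ≤ G z) (hμ : 0 < μ)
    (hsc : ∀ x y, (G' x - G' y) (x - y) ≥ μ * L (x - y) (x - y)) (hLB : 0 ≤ LB)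
    (hsm : ∀ z ∈ p.closedBall xstar R, ∀ w ∈ p.closedBall xstar R,
      (G' z - G' w) (z - w) ≤ LB * L (z - w) (z - w))
    (hκ : 0 < κ) (hs : 0 < s) (hμs : μ * s ≤ κ ^ 2) (hsLB : s * LB ≤ 1)
    (hR0 : 0 ≤ R) (hR : 8 * (1 + κ ^ 2) * a ≤ μ * R ^ 2)
    {θ lam : ℝ} (hθ0 : 0 < θ) (hθ1 : θ < 1) (hθ : θ ^ 2 = μ * s)
    (hlam : lam = (1 - θ) / (1 + θ)) {xprev x P : H}
    (hP : L P = G' (x + lam • (x - xprev)))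
    (hE : pagdLyapunov L G xstar s lam xprev x ≤ 2 * s * a) :
    s ^ 2 * θ * L P P + pagdLyapunov L G xstar s lam x (x + lam • (x - xprev) - s • P)
      ≤ pagdLyapunov L G xstar s lam xprev x := by
  have hL : ∀ z, 0 ≤ L z z := fun z => hp z ▸ sq_nonneg _
  have hlam0 : 0 ≤ lam := by rw [hlam]; exact div_nonneg (by linarith) (by linarith)
  have hlam1 : lam ≤ 1 := by rw [hlam, div_le_one (by linarith)]; linarith
  set D := x - xprev
  set y := x + lam • D
  have hy := two_mul_seminorm_le_of_pagdLyapunov_le hp hG hmin hμ hsc hκ hs hμs hR0 hR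
    hlam0 hlam1 hE
  have hdesc := two_mul_le_of_smoothOn_closedBall hp hG hmin hLB hsm hs.le hsLB hP hy
  have hlower := add_fderiv_add_le_of_strongMono hG hsc y x
  rw [show x - y = (-lam) • D by simp [y], ← hP, map_smul, smul_eq_mul,
    form_smul_smul] at hlower
  have hexp : L (y - s • P - x) (y - s • P - x)
      = lam ^ 2 * L D D - 2 * lam * s * L P D + s ^ 2 * L P P := by
    rw [show y - s • P - x = lam • D - s • P by simp only [y]; abel]
    simp only [map_sub, sub_apply, form_smul_smul, hsymm D P]
    ring
  have hcore := pagdLyapunov_coeff_le hθ0 hθ1 hs hlam (hL P) (hL D)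
    (form_le_sqrt_mul_sqrt hsymm hL P D)
  rw [hθ] at hcore
  unfold pagdLyapunov
  rw [hexp]
  change _ ≤ 2 * s * (G x - G xstar) + lam * L D D
  linarith [mul_le_mul_of_nonneg_left hlower (by positivity : (0 : ℝ) ≤ 2 * s),
    mul_le_mul_of_nonneg_left hdesc hs.le]

theorem mul_sum_range_le_of_pagd (hsymm : ∀ x y, L x y = L y x) (hp : ∀ z, p z ^ 2 = L z z)
    (hG : ∀ x, HasFDerivAt G (G' x) x) (hmin : ∀ z, G xstar ≤ G z) (hμ : 0 < μ)
    (hsc : ∀ x y, (G' x - G' y) (x - y) ≥ μ * L (x - y) (x - y)) (hLB : 0 ≤ LB)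
    (hsm : ∀ z ∈ p.closedBall xstar R, ∀ w ∈ p.closedBall xstar R,
      (G' z - G' w) (z - w) ≤ LB * L (z - w) (z - w))
    (hκ : 0 < κ) (hs : 0 < s) (hμs : μ * s ≤ κ ^ 2) (hsLB : s * LB ≤ 1) (hR0 : 0 ≤ R)
    {θ lam : ℝ} (hθ0 : 0 < θ) (hθ1 : θ < 1) (hθ : θ ^ 2 = μ * s)
    (hlam : lam = (1 - θ) / (1 + θ)) {x y P : ℕ → H}
    (hR : 8 * (1 + κ ^ 2) * (G (x 0) - G xstar) ≤ μ * R ^ 2)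
    (hP : ∀ k, L (P k) = G' (y k)) (hy : ∀ k, y k = x k + lam • (x k - x (k - 1)))
    (hx : ∀ k, x (k + 1) = y k - s • P k) (n : ℕ) :
    s ^ 2 * θ * ∑ k ∈ Finset.range n, L (P k) (P k) ≤ 2 * s * (G (x 0) - G xstar) := by
  have hL : ∀ z, 0 ≤ L z z := fun z => hp z ▸ sq_nonneg _
  -- with the convention `x (0 - 1) = x 0`, the energy starts at `2 s (G (x 0) - G xstar)`
  set J := fun k => pagdLyapunov L G xstar s lam (x (k - 1)) (x k)
  have hJ0 : J 0 = 2 * s * (G (x 0) - G xstar) := by simp [J, pagdLyapunov]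
  have hstep : ∀ k, J k ≤ J 0 → s ^ 2 * θ * L (P k) (P k) + J (k + 1) ≤ J k := by
    intro k hk
    have := pagdLyapunov_step hsymm hp hG hmin hμ hsc hLB hsm hκ hs hμs hsLB hR0 hR
      hθ0 hθ1 hθ hlam (by rw [hP, hy]) (hJ0 ▸ hk)
    simpa only [J, Nat.add_sub_cancel, hx, hy] using this
  have hJn : 0 ≤ J n := pagdLyapunov_nonneg hL hmin hs.le
    (by rw [hlam]; exact div_nonneg (by linarith) (by linarith)) _ _
  linarith [mul_sum_range_add_le_of_step (by positivity) (fun k => hL (P k)) hstep n]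

end Lyapunov

theorem four_mul_one_add_sq_le_one_add_sqrt_sq {r : ℝ} (hr : 1 ≤ r) :
    4 * (1 + ((r - 1) / (r + 1)) ^ 2) ≤ (1 + √r) ^ 2 := by
  set t := √r
  have ht : 1 ≤ t := Real.one_le_sqrt.2 hr
  have hr' : r = t ^ 2 := (Real.sq_sqrt (by linarith)).symm
  rw [hr', div_pow, ← sub_nonneg]
  have hden : 0 < (t ^ 2 + 1) ^ 2 := by positivity
  -- the numerator factors as `(t - 1) (t⁵ + 3t⁴ - 2t³ + 2t² + 5t + 7)`
  have hnum : 0 ≤ (1 + t) ^ 2 * (t ^ 2 + 1) ^ 2 - 4 * ((t ^ 2 + 1) ^ 2 + (t ^ 2 - 1) ^ 2) := by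
    have hq : 0 ≤ t ^ 5 + 3 * t ^ 4 - 2 * t ^ 3 + 2 * t ^ 2 + 5 * t + 7 := by
      nlinarith [pow_le_pow_left₀ zero_le_one ht 3, pow_le_pow_left₀ zero_le_one ht 4,
        pow_le_pow_left₀ zero_le_one ht 5]
    nlinarith [mul_nonneg (sub_nonneg.2 ht) hq]
  have : (1 + t) ^ 2 - 4 * (1 + (t ^ 2 - 1) ^ 2 / (t ^ 2 + 1) ^ 2)
      = ((1 + t) ^ 2 * (t ^ 2 + 1) ^ 2 - 4 * ((t ^ 2 + 1) ^ 2 + (t ^ 2 - 1) ^ 2))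
        / (t ^ 2 + 1) ^ 2 := by
    field_simp
  rw [this]
  positivity

theorem eight_mul_le_mul_sq_radius {μ r a : ℝ} (hμ : 0 < μ) (hr : 1 ≤ r) (ha : 0 ≤ a) :
    8 * (1 + ((r - 1) / (r + 1)) ^ 2) * a ≤ μ * (√(2 / μ * a) + √(2 * r * a) / √μ) ^ 2 := by
  have hR : √(2 / μ * a) + √(2 * r * a) / √μ = (1 + √r) * √(2 / μ * a) := by
    rw [← Real.sqrt_div' _ hμ.le, add_mul, one_mul, ← Real.sqrt_mul (by linarith)]
    ring_nf
  have hsq : μ * (√(2 / μ * a)) ^ 2 = 2 * a := by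
    rw [Real.sq_sqrt (by positivity)]; field_simp
  rw [hR, mul_pow, mul_left_comm, hsq]
  nlinarith [four_mul_one_add_sq_le_one_add_sqrt_sq hr]

theorem two_mul_one_add_div_eq {θ lam : ℝ} (hθ : 0 < θ) (hlam : lam = (1 - θ) / (1 + θ))
    (s : ℝ) : 2 * (1 + lam) / (s * (1 - lam)) = 2 * s / (s ^ 2 * θ) := by
  have : 1 + θ ≠ 0 := by positivity
  rw [hlam]; field_simp [hθ.ne']; ring

theorem PAGD_residuals_ell2_general
    {H : Type*} [NormedAddCommGroup H] [InnerProductSpace ℝ H]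
    (L : H →ₗ[ℝ] (H →L[ℝ] ℝ))
    (C₁ : ℝ) (hC₁ : 0 < C₁)
    (hsymm : ∀ x y : H, L x y = L y x)
    (hcoer : ∀ x : H, C₁ * ‖x‖ ^ 2 ≤ L x x)
    (Linv : (H →L[ℝ] ℝ) → H)
    (hLinv : ∀ f : H →L[ℝ] ℝ, L (Linv f) = f)
    (G : H → ℝ) (G' : H → H →L[ℝ] ℝ)
    (hdiff : ∀ x : H, HasFDerivAt G (G' x) x)
    (μ : ℝ) (hμ : 0 < μ)
    -- μ-strong convexity
    (hsc : ∀ x y : H, (G' x - G' y) (x - y) ≥ μ * L (x - y) (x - y))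
    -- minimizer and minimum
    (xstar : H) (hmin : ∀ y : H, G xstar ≤ G y)
    (x₀ : H) (r : ℝ) (hr : 1 < r)
    -- the invariant set 𝔅
    (R₁ R₂ R : ℝ)
    (hR₁ : R₁ = Real.sqrt (2 / μ * (G x₀ - G xstar)))
    (hR₂ : R₂ = Real.sqrt (2 * r * (G x₀ - G xstar)))
    (η : ℝ) (hη : η = Real.sqrt μ)
    (hR : R = R₁ + R₂ / η)
    (𝔅 : Set H)
    (h𝔅 : 𝔅 = {z : H | Real.sqrt (L (z - xstar) (z - xstar)) ≤ R})
    -- L_B : a Lipschitz smoothness constant of G on 𝔅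
    (LB : ℝ) (hLB : 0 < LB)
    (hsm : ∀ z ∈ 𝔅, ∀ w ∈ 𝔅, (G' z - G' w) (z - w) ≤ LB * L (z - w) (z - w))
    -- step size restriction
    (s : ℝ) (hs : 0 < s)
    (hs' : s ≤ min (1 / LB) (((r - 1) / (r + 1)) ^ 2 / μ))
    -- PAGD parameters and iterates
    (θ lam : ℝ) (hθ : θ = η * Real.sqrt s) (hlam : lam = (1 - θ) / (1 + θ))
    (x y : ℕ → H)
    (hx0 : x 0 = x₀)
    (hy : ∀ k : ℕ, y k = x k + lam • (x k - x (k - 1)))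
    (hx : ∀ k : ℕ, x (k + 1) = y k - s • Linv (G' (y k))) :
    (∀ N : ℕ,
      ∑ k ∈ Finset.range (N + 1), (G' (y k)) (Linv (G' (y k)))
        ≤ 2 * (1 + lam) / (s * (1 - lam)) * (G x₀ - G xstar)) ∧
    Summable (fun k : ℕ => (G' (y k)) (Linv (G' (y k)))) := by
  have hL : ∀ z, 0 ≤ L z z := fun z => (by positivity : 0 ≤ C₁ * ‖z‖ ^ 2).trans (hcoer z)
  set κ := (r - 1) / (r + 1)
  have hκ : 0 < κ := div_pos (by linarith) (by linarith)
  have hsLB : s * LB ≤ 1 := by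
    have := hs'.trans (min_le_left _ _); rwa [le_div_iff₀ hLB] at this
  have hμs : μ * s ≤ κ ^ 2 := by
    have := hs'.trans (min_le_right _ _); rw [le_div_iff₀ hμ] at this; linarith
  have hθ0 : 0 < θ := by rw [hθ, hη]; positivity
  have hθsq : θ ^ 2 = μ * s := by rw [hθ, hη, mul_pow, Real.sq_sqrt hμ.le, Real.sq_sqrt hs.le]
  have hκ1 : κ < 1 := (div_lt_one (by linarith)).2 (by linarith)
  have hθ1 : θ < 1 := by nlinarith
  have hR8 : 8 * (1 + κ ^ 2) * (G (x 0) - G xstar) ≤ μ * R ^ 2 := by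
    rw [hR, hR₁, hR₂, hη, hx0]; exact eight_mul_le_mul_sq_radius hμ hr.le (sub_nonneg.2 (hmin x₀))
  have hR0 : 0 ≤ R := by rw [hR, hR₁, hR₂, hη]; positivity
  have hsum := mul_sum_range_le_of_pagd hsymm (sq_formSeminorm hsymm hL) hdiff hmin hμ hsc
    hLB.le (by subst h𝔅; exact hsm) hκ hs hμs hsLB hR0 hθ0 hθ1 hθsq hlam hR8
    (fun k => hLinv (G' (y k))) hy hx
  have hres : ∀ k, 0 ≤ (G' (y k)) (Linv (G' (y k))) := fun k => by
    simpa only [hLinv] using hL (Linv (G' (y k)))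
  have hbound : ∀ n, ∑ k ∈ Finset.range n, (G' (y k)) (Linv (G' (y k)))
      ≤ 2 * (1 + lam) / (s * (1 - lam)) * (G x₀ - G xstar) := by
    intro n
    rw [two_mul_one_add_div_eq hθ0 hlam, div_mul_eq_mul_div, le_div_iff₀ (by positivity), ← hx0]
    simpa only [hLinv, mul_comm] using hsum n
  exact ⟨fun N => hbound (N + 1), summable_of_sum_range_le hres hbound⟩

/-- ℓ²-convergence of the PAGD residuals. Under the invariant-set
step size restriction, for every `N`
`Σ_{k=0}^{N} ‖G'(y_k)‖_{𝓛⁻¹}² ≤ (2(1+λ)/(s(1−λ)))(G(x₀) − G*)`, and hence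
`Σ_{k=0}^{∞} ‖G'(y_k)‖_{𝓛⁻¹}² < ∞` (where `‖f‖_{𝓛⁻¹}² = ⟨f, 𝓛⁻¹f⟩`). -/
theorem PAGD_residuals_ell2
    {H : Type*} [NormedAddCommGroup H] [InnerProductSpace ℝ H]
    [CompleteSpace H] [SeparableSpace H]
    (L : H →ₗ[ℝ] (H →L[ℝ] ℝ))
    (C₁ C₂ : ℝ) (hC₁ : 0 < C₁) (hC₂ : 0 < C₂)
    (hsymm : ∀ x y : H, L x y = L y x)
    (hbdd : ∀ x y : H, L x y ≤ C₂ * ‖x‖ * ‖y‖)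
    (hcoer : ∀ x : H, C₁ * ‖x‖ ^ 2 ≤ L x x)
    (Linv : (H →L[ℝ] ℝ) → H)
    (hLinv : ∀ f : H →L[ℝ] ℝ, L (Linv f) = f)
    (hLinv' : ∀ x : H, Linv (L x) = x)
    (G : H → ℝ) (G' : H → H →L[ℝ] ℝ)
    (hdiff : ∀ x : H, HasFDerivAt G (G' x) x)
    (μ : ℝ) (hμ : 0 < μ)
    -- μ-strong convexity
    (hsc : ∀ x y : H, (G' x - G' y) (x - y) ≥ μ * L (x - y) (x - y))
    -- local Lipschitz smoothness
    (hlip : ∀ B : Set H, Convex ℝ B → Bornology.IsBounded B →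
      ∃ LB > (0:ℝ), ∀ x ∈ B, ∀ y ∈ B,
        (G' x - G' y) (x - y) ≤ LB * L (x - y) (x - y))
    -- minimizer and minimum
    (xstar : H) (hmin : ∀ y : H, G xstar ≤ G y)
    (x₀ : H) (r : ℝ) (hr : 1 < r)
    -- the invariant set 𝔅
    (R₁ R₂ R : ℝ)
    (hR₁ : R₁ = Real.sqrt (2 / μ * (G x₀ - G xstar)))
    (hR₂ : R₂ = Real.sqrt (2 * r * (G x₀ - G xstar)))
    (η : ℝ) (hη : η = Real.sqrt μ)
    (hR : R = R₁ + R₂ / η)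
    (𝔅 : Set H)
    (h𝔅 : 𝔅 = {z : H | Real.sqrt (L (z - xstar) (z - xstar)) ≤ R})
    -- L_B : a Lipschitz smoothness constant of G on 𝔅
    (LB : ℝ) (hLB : 0 < LB)
    (hsm : ∀ z ∈ 𝔅, ∀ w ∈ 𝔅, (G' z - G' w) (z - w) ≤ LB * L (z - w) (z - w))
    -- step size restriction
    (s : ℝ) (hs : 0 < s)
    (hs' : s ≤ min (1 / LB) (((r - 1) / (r + 1)) ^ 2 / μ))
    -- PAGD parameters and iterates
    (θ lam : ℝ) (hθ : θ = η * Real.sqrt s) (hlam : lam = (1 - θ) / (1 + θ))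
    (x y v : ℕ → H)
    (hx0 : x 0 = x₀)
    (hy : ∀ k : ℕ, y k = x k + lam • (x k - x (k - 1)))
    (hx : ∀ k : ℕ, x (k + 1) = y k - s • Linv (G' (y k)))
    (hv0 : v 0 = x 0)
    (hv : ∀ k : ℕ, v (k + 1) = x k + (1 / θ) • (x (k + 1) - x k)) :
    (∀ N : ℕ,
      ∑ k ∈ Finset.range (N + 1), (G' (y k)) (Linv (G' (y k)))
        ≤ 2 * (1 + lam) / (s * (1 - lam)) * (G x₀ - G xstar)) ∧
    Summable (fun k : ℕ => (G' (y k)) (Linv (G' (y k)))) :=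
  PAGD_residuals_ell2_general L C₁ hC₁ hsymm hcoer Linv hLinv G G' hdiff μ hμ hsc xstar hmin x₀ r hr
    R₁ R₂ R hR₁ hR₂ η hη hR 𝔅 h𝔅 LB hLB hsm s hs hs' θ lam hθ hlam x y hx0 hy hx
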